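/- arXiv:2401.05456 — 3 statements merged into one kernel-verified Lean document; each statement's English description precedes it below -/
import Mathlib

section
/- For complex square matrices A and B and real p with 0 < p ≤ 2, one has 2^(p-1)·(‖A‖_p^p + ‖B‖_p^p) ≤ ‖A+B‖_p^p + ‖A−B‖_p^p, where ‖X‖_p = (tr|X|^p)^(1/p) is the Schatten p-(quasi)norm. -/
open scoped ComplexOrder

/-- The Schatten `p`-(quasi)norm of a square complex matrix:
`‖X‖_p = (tr |X|^p)^(1/p)`, computed as `(∑ i, λ_i(Xᴴ * X) ^ (p/2)) ^ (1/p)`,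
where `λ_i(Xᴴ * X)` are the (nonnegative) eigenvalues of `Xᴴ * X`, whose square
roots are the singular values of `X`. -/
noncomputable def schattenNorm {m : Type*} [Fintype m] [DecidableEq m]
    (p : ℝ) (X : Matrix m m ℂ) : ℝ :=
  (∑ i, ((Matrix.posSemidef_conjTranspose_mul_self X).1.eigenvalues i ^ (p / 2))) ^ (1 / p)

/-!
Put `q = p / 2`, so that `‖X‖_p ^ p = tr (Xᴴ X) ^ q`. The parallelogram law
`(A + B)ᴴ (A + B) + (A - B)ᴴ (A - B) = 2 (Aᴴ A + Bᴴ B)` reduces the claim to two trace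
inequalities for positive semidefinite `X`, `Y` and `0 < q ≤ 1`:
concavity, `2 ^ (q - 1) (tr X ^ q + tr Y ^ q) ≤ tr (X + Y) ^ q`, used for `(Aᴴ A, Bᴴ B)` and
for `(Aᴴ A + Bᴴ B, Aᴴ A + Bᴴ B)`, and McCarthy's subadditivity
`tr (X + Y) ^ q ≤ tr X ^ q + tr Y ^ q`, used for `((A + B)ᴴ (A + B), (A - B)ᴴ (A - B))`.

Both are proved in an orthonormal eigenbasis `d` of `X + Y`. Concavity follows from the scalar
inequality and the pinching bound `tr X ^ q ≤ ∑ k, ⟪d k, X d k⟫ ^ q`, which is Jensen's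
inequality for the doubly stochastic matrix `‖⟪b i, d k⟫‖ ^ 2`, `b` an eigenbasis of `X`.
For subadditivity write `tr (X + Y) ^ q = tr ((X + Y) ^ (q - 1) X) + tr ((X + Y) ^ (q - 1) Y)`;
if `0 ≤ X ≤ R` then `tr (R ^ (q - 1) X) ≤ tr X ^ q`, by Jensen for `t ↦ t ^ (1 - q)` and the
bound `⟪v, R⁻¹ v⟫ ≤ λ⁻¹` for a unit eigenvector `v` of `X` with eigenvalue `λ > 0`.
-/

section

open scoped InnerProductSpace Matrix
open Finset RCLike

variable {𝕜 E ι κ : Type*} [RCLike 𝕜] [NormedAddCommGroup E] [InnerProductSpace 𝕜 E]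
  [Fintype ι] [Fintype κ]

theorem Real.rpow_eq_inv_rpow_one_sub_mul {x q : ℝ} (hx : 0 ≤ x) (hq : 0 < q) :
    x ^ q = x⁻¹ ^ (1 - q) * x := by
  rcases hx.eq_or_lt with rfl | hx
  · rw [Real.zero_rpow hq.ne', mul_zero]
  · rw [Real.inv_rpow hx.le, ← Real.rpow_neg hx.le, ← Real.rpow_add_one hx.ne']
    ring_nf

theorem ConcaveOn.sum_le_sum_map_sum_mul {s : Set ℝ} {f : ℝ → ℝ} (hf : ConcaveOn ℝ s f)
    {w : ι → κ → ℝ} (hw : ∀ i j, 0 ≤ w i j) (hrow : ∀ i, ∑ j, w i j = 1)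
    (hcol : ∀ j, ∑ i, w i j = 1) {x : ι → ℝ} (hx : ∀ i, x i ∈ s) :
    ∑ i, f (x i) ≤ ∑ j, f (∑ i, w i j * x i) :=
  calc ∑ i, f (x i) = ∑ j, ∑ i, w i j * f (x i) := by
        rw [Finset.sum_comm]; simp_rw [← Finset.sum_mul, hrow, one_mul]
    _ ≤ ∑ j, f (∑ i, w i j * x i) := Finset.sum_le_sum fun j _ => by
        simpa only [smul_eq_mul] using
          hf.le_map_sum (fun i _ => hw i j) (hcol j) (fun i _ => hx i)

theorem Real.two_rpow_sub_one_mul_add_rpow_le {q a b : ℝ} (hq0 : 0 ≤ q) (hq1 : q ≤ 1)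
    (ha : 0 ≤ a) (hb : 0 ≤ b) : 2 ^ (q - 1) * (a ^ q + b ^ q) ≤ (a + b) ^ q := by
  have hmid := (Real.concaveOn_rpow hq0 hq1).2 (Set.mem_Ici.2 ha) (Set.mem_Ici.2 hb)
    (by norm_num : (0 : ℝ) ≤ 1 / 2) (by norm_num : (0 : ℝ) ≤ 1 / 2) (by norm_num)
  simp only [smul_eq_mul] at hmid
  have h2 : (0 : ℝ) ≤ 2 ^ q := by positivity
  calc 2 ^ (q - 1) * (a ^ q + b ^ q) = 2 ^ q * (1 / 2 * a ^ q + 1 / 2 * b ^ q) := by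
        rw [Real.rpow_sub_one two_ne_zero]; ring
    _ ≤ 2 ^ q * (1 / 2 * a + 1 / 2 * b) ^ q := mul_le_mul_of_nonneg_left hmid h2
    _ = (a + b) ^ q := by
        rw [← Real.mul_rpow zero_le_two (by positivity)]; ring_nf

theorem re_inner_add_apply_self (T S : E →ₗ[𝕜] E) (x : E) :
    re ⟪x, (T + S) x⟫_𝕜 = re ⟪x, T x⟫_𝕜 + re ⟪x, S x⟫_𝕜 := by
  rw [LinearMap.add_apply, inner_add_right, map_add]

namespace OrthonormalBasis

def Diagonalizes (b : OrthonormalBasis ι 𝕜 E) (T : E →ₗ[𝕜] E) (μ : ι → ℝ) : Prop :=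
  ∀ i, T (b i) = (μ i : 𝕜) • b i

theorem sum_norm_inner_sq_eq_one (b : OrthonormalBasis ι 𝕜 E) (c : OrthonormalBasis κ 𝕜 E)
    (j : κ) : ∑ i, ‖⟪b i, c j⟫_𝕜‖ ^ 2 = 1 := by
  rw [b.sum_sq_norm_inner_right, c.norm_eq_one, one_pow]

variable {b : OrthonormalBasis ι 𝕜 E} {T : E →ₗ[𝕜] E} {μ : ι → ℝ}

namespace Diagonalizes

theorem inner_map_self_eq (hb : b.Diagonalizes T μ) (x : E) :
    ⟪x, T x⟫_𝕜 = ((∑ i, μ i * ‖⟪b i, x⟫_𝕜‖ ^ 2 : ℝ) : 𝕜) := by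
  have hTx : T x = ∑ i, ((μ i : 𝕜) * ⟪b i, x⟫_𝕜) • b i := by
    conv_lhs => rw [← b.sum_repr' x]
    simp only [map_sum, map_smul, hb _, smul_smul, mul_comm]
  rw [hTx, inner_sum]
  push_cast
  refine Finset.sum_congr rfl fun i _ => ?_
  rw [inner_smul_right, ← inner_conj_symm, RCLike.norm_conj, ← RCLike.conj_mul]
  ring

theorem re_inner_map_self_eq (hb : b.Diagonalizes T μ) (x : E) :
    re ⟪x, T x⟫_𝕜 = ∑ i, μ i * ‖⟪b i, x⟫_𝕜‖ ^ 2 := by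
  rw [hb.inner_map_self_eq, ofReal_re]

theorem re_inner_map_self_nonneg (hb : b.Diagonalizes T μ) (hμ : 0 ≤ μ) (x : E) :
    0 ≤ re ⟪x, T x⟫_𝕜 := by
  rw [hb.re_inner_map_self_eq]
  exact Finset.sum_nonneg fun i _ => mul_nonneg (hμ i) (by positivity)

theorem re_inner_map_basis (hb : b.Diagonalizes T μ) (i : ι) : re ⟪b i, T (b i)⟫_𝕜 = μ i := by
  rw [hb i, inner_smul_right, inner_self_eq_norm_sq_to_K, b.norm_eq_one]
  simp

variable {d : OrthonormalBasis κ 𝕜 E}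

theorem sum_rpow_le_sum_re_inner_rpow (hb : b.Diagonalizes T μ) (hμ : 0 ≤ μ)
    (c : OrthonormalBasis κ 𝕜 E) {q : ℝ} (hq0 : 0 ≤ q) (hq1 : q ≤ 1) :
    ∑ i, μ i ^ q ≤ ∑ j, re ⟪c j, T (c j)⟫_𝕜 ^ q := by
  simp_rw [hb.re_inner_map_self_eq, mul_comm (μ _)]
  refine (Real.concaveOn_rpow hq0 hq1).sum_le_sum_map_sum_mul (fun _ _ => by positivity)
    (fun i => ?_) (b.sum_norm_inner_sq_eq_one c) (fun i => Set.mem_Ici.2 (hμ i))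
  simp_rw [norm_inner_symm (b i)]
  exact c.sum_norm_inner_sq_eq_one b i

theorem sum_norm_inner_sq_mul_inv_le_inv {R : E →ₗ[𝕜] E} {ρ : κ → ℝ}
    (hT : b.Diagonalizes T μ) (hμ : 0 ≤ μ) (hR : d.Diagonalizes R ρ)
    (hTR : ∀ x, re ⟪x, T x⟫_𝕜 ≤ re ⟪x, R x⟫_𝕜) {j : ι} (hj : 0 < μ j) :
    ∑ k, ‖⟪d k, b j⟫_𝕜‖ ^ 2 * (ρ k)⁻¹ ≤ (μ j)⁻¹ := by
  set g := ∑ k, ‖⟪d k, b j⟫_𝕜‖ ^ 2 * (ρ k)⁻¹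
  -- `x = R⁻¹ (b j)`, inverting `R` only off its kernel thanks to `0⁻¹ = 0`.
  set x : E := d.repr.symm (WithLp.toLp 2 fun k => ((ρ k)⁻¹ : 𝕜) * ⟪d k, b j⟫_𝕜)
  have hx : ∀ k, ⟪d k, x⟫_𝕜 = ((ρ k)⁻¹ : 𝕜) * ⟪d k, b j⟫_𝕜 := fun k => by
    rw [← d.repr_apply_apply, LinearIsometryEquiv.apply_symm_apply]
  have hRx : re ⟪x, R x⟫_𝕜 = g := by
    rw [hR.re_inner_map_self_eq]
    refine Finset.sum_congr rfl fun k _ => ?_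
    rw [hx, norm_mul, norm_inv, norm_ofReal, mul_pow, inv_pow, sq_abs]
    rcases eq_or_ne (ρ k) 0 with h | h
    · simp [h]
    · field_simp
  have hbx : ⟪b j, x⟫_𝕜 = (g : 𝕜) := by
    rw [← d.sum_inner_mul_inner, ofReal_sum]
    refine Finset.sum_congr rfl fun k _ => ?_
    rw [hx, ← inner_conj_symm (d k), RCLike.norm_conj, ofReal_mul, ofReal_pow, ← RCLike.mul_conj,
      ofReal_inv]
    ring
  have hgg : μ j * g ^ 2 ≤ g := calc
    μ j * g ^ 2 = μ j * ‖⟪b j, x⟫_𝕜‖ ^ 2 := by rw [hbx, norm_ofReal, sq_abs]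
    _ ≤ re ⟪x, T x⟫_𝕜 := by
      rw [hT.re_inner_map_self_eq]
      exact Finset.single_le_sum (f := fun i => μ i * ‖⟪b i, x⟫_𝕜‖ ^ 2)
        (fun i _ => mul_nonneg (hμ i) (by positivity)) (Finset.mem_univ j)
    _ ≤ g := hRx ▸ hTR x
  rcases le_or_gt g 0 with hg | hg
  · exact hg.trans (inv_pos.2 hj).le
  · rw [le_inv_comm₀ hg hj, inv_eq_one_div, le_div_iff₀ hg]
    nlinarith

theorem sum_inv_rpow_mul_re_inner_le {R : E →ₗ[𝕜] E} {ρ : κ → ℝ}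
    (hT : b.Diagonalizes T μ) (hμ : 0 ≤ μ) (hR : d.Diagonalizes R ρ) (hρ : 0 ≤ ρ)
    (hTR : ∀ x, re ⟪x, T x⟫_𝕜 ≤ re ⟪x, R x⟫_𝕜) {q : ℝ} (hq0 : 0 < q) (hq1 : q ≤ 1) :
    ∑ k, (ρ k)⁻¹ ^ (1 - q) * re ⟪d k, T (d k)⟫_𝕜 ≤ ∑ j, μ j ^ q := by
  have hconc : ConcaveOn ℝ (Set.Ici 0) fun t : ℝ => t ^ (1 - q) :=
    Real.concaveOn_rpow (by linarith) (by linarith)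
  calc ∑ k, (ρ k)⁻¹ ^ (1 - q) * re ⟪d k, T (d k)⟫_𝕜
      = ∑ j, μ j * ∑ k, ‖⟪d k, b j⟫_𝕜‖ ^ 2 * (ρ k)⁻¹ ^ (1 - q) := by
        simp_rw [hT.re_inner_map_self_eq, Finset.mul_sum]
        rw [Finset.sum_comm]
        refine Finset.sum_congr rfl fun j _ => Finset.sum_congr rfl fun k _ => ?_
        rw [norm_inner_symm]
        ring
    _ ≤ ∑ j, μ j ^ q := Finset.sum_le_sum fun j _ => ?_
  rcases (show 0 ≤ μ j from hμ j).eq_or_lt with hj | hj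
  · rw [← hj, zero_mul, Real.zero_rpow hq0.ne']
  have hjensen := hconc.le_map_sum (t := Finset.univ) (fun k _ => by positivity)
    (d.sum_norm_inner_sq_eq_one b j) (fun k _ => Set.mem_Ici.2 (inv_nonneg.2 (hρ k)))
  simp only [smul_eq_mul] at hjensen
  calc μ j * ∑ k, ‖⟪d k, b j⟫_𝕜‖ ^ 2 * (ρ k)⁻¹ ^ (1 - q)
      ≤ μ j * (∑ k, ‖⟪d k, b j⟫_𝕜‖ ^ 2 * (ρ k)⁻¹) ^ (1 - q) :=
        mul_le_mul_of_nonneg_left hjensen hj.le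
    _ ≤ μ j * (μ j)⁻¹ ^ (1 - q) := by
        have hg : 0 ≤ ∑ k, ‖⟪d k, b j⟫_𝕜‖ ^ 2 * (ρ k)⁻¹ :=
          Finset.sum_nonneg fun k _ => mul_nonneg (by positivity) (inv_nonneg.2 (hρ k))
        gcongr
        exact hT.sum_norm_inner_sq_mul_inv_le_inv hμ hR hTR hj
    _ = μ j ^ q := by rw [Real.rpow_eq_inv_rpow_one_sub_mul hj.le hq0, mul_comm]

variable {ι' : Type*} [Fintype ι'] {c : OrthonormalBasis ι' 𝕜 E} {S : E →ₗ[𝕜] E}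
  {ν : ι' → ℝ} {ρ : κ → ℝ}

theorem sum_rpow_le_add (hT : b.Diagonalizes T μ) (hS : c.Diagonalizes S ν)
    (hTS : d.Diagonalizes (T + S) ρ) (hμ : 0 ≤ μ) (hν : 0 ≤ ν) {q : ℝ} (hq0 : 0 < q)
    (hq1 : q ≤ 1) :
    ∑ k, ρ k ^ q ≤ ∑ i, μ i ^ q + ∑ j, ν j ^ q := by
  have hρ : 0 ≤ ρ := fun k => by
    rw [Pi.zero_apply, ← hTS.re_inner_map_basis, re_inner_add_apply_self T S]
    exact add_nonneg (hT.re_inner_map_self_nonneg hμ _) (hS.re_inner_map_self_nonneg hν _)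
  calc ∑ k, ρ k ^ q
      = ∑ k, (ρ k)⁻¹ ^ (1 - q) * re ⟪d k, T (d k)⟫_𝕜
        + ∑ k, (ρ k)⁻¹ ^ (1 - q) * re ⟪d k, S (d k)⟫_𝕜 := by
        rw [← Finset.sum_add_distrib]
        refine Finset.sum_congr rfl fun k _ => ?_
        rw [Real.rpow_eq_inv_rpow_one_sub_mul (hρ k) hq0, ← mul_add, ← re_inner_add_apply_self T S,
          hTS.re_inner_map_basis]
    _ ≤ ∑ i, μ i ^ q + ∑ j, ν j ^ q := by
        gcongr
        · refine hT.sum_inv_rpow_mul_re_inner_le hμ hTS hρ (fun x => ?_) hq0 hq1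
          rw [re_inner_add_apply_self T S]
          linarith [hS.re_inner_map_self_nonneg hν x]
        · refine hS.sum_inv_rpow_mul_re_inner_le hν hTS hρ (fun x => ?_) hq0 hq1
          rw [re_inner_add_apply_self T S]
          linarith [hT.re_inner_map_self_nonneg hμ x]

theorem two_rpow_sub_one_mul_add_le (hT : b.Diagonalizes T μ) (hS : c.Diagonalizes S ν)
    (hTS : d.Diagonalizes (T + S) ρ) (hμ : 0 ≤ μ) (hν : 0 ≤ ν) {q : ℝ} (hq0 : 0 ≤ q)
    (hq1 : q ≤ 1) :
    2 ^ (q - 1) * (∑ i, μ i ^ q + ∑ j, ν j ^ q) ≤ ∑ k, ρ k ^ q := by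
  calc 2 ^ (q - 1) * (∑ i, μ i ^ q + ∑ j, ν j ^ q)
      ≤ 2 ^ (q - 1) * (∑ k, re ⟪d k, T (d k)⟫_𝕜 ^ q + ∑ k, re ⟪d k, S (d k)⟫_𝕜 ^ q) := by
        gcongr
        · exact hT.sum_rpow_le_sum_re_inner_rpow hμ d hq0 hq1
        · exact hS.sum_rpow_le_sum_re_inner_rpow hν d hq0 hq1
    _ = ∑ k, 2 ^ (q - 1) * (re ⟪d k, T (d k)⟫_𝕜 ^ q + re ⟪d k, S (d k)⟫_𝕜 ^ q) := by
        rw [← Finset.sum_add_distrib, Finset.mul_sum]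
    _ ≤ ∑ k, ρ k ^ q := Finset.sum_le_sum fun k _ => by
        rw [← hTS.re_inner_map_basis, re_inner_add_apply_self T S]
        exact Real.two_rpow_sub_one_mul_add_rpow_le hq0 hq1
          (hT.re_inner_map_self_nonneg hμ _) (hS.re_inner_map_self_nonneg hν _)

end Diagonalizes
end OrthonormalBasis

namespace Matrix

theorem parallelogram_law_conjTranspose_mul_self {n R : Type*} [Fintype n] [Ring R]
    [StarRing R] (A B : Matrix n n R) :
    (A + B)ᴴ * (A + B) + (A - B)ᴴ * (A - B) = (Aᴴ * A + Bᴴ * B) + (Aᴴ * A + Bᴴ * B) := by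
  simp only [conjTranspose_add, conjTranspose_sub]
  noncomm_ring

variable {n : Type*} [Fintype n] [DecidableEq n] {A B : Matrix n n 𝕜}

theorem IsHermitian.eigenvectorBasis_diagonalizes (hA : A.IsHermitian) :
    hA.eigenvectorBasis.Diagonalizes A.toEuclideanLin hA.eigenvalues := fun i => by
  ext1 k
  rw [toLpLin_apply, hA.mulVec_eigenvectorBasis i, WithLp.ofLp_smul,
    RCLike.real_smul_eq_coe_smul (K := 𝕜)]

theorem IsHermitian.eigenvectorBasis_diagonalizes_add (hA : A.IsHermitian) (hB : B.IsHermitian) :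
    (hA.add hB).eigenvectorBasis.Diagonalizes (A.toEuclideanLin + B.toEuclideanLin)
      (hA.add hB).eigenvalues := by
  simpa only [map_add] using (hA.add hB).eigenvectorBasis_diagonalizes

namespace PosSemidef

theorem sum_eigenvalues_add_rpow_le (hA : A.PosSemidef) (hB : B.PosSemidef) {q : ℝ}
    (hq0 : 0 < q) (hq1 : q ≤ 1) :
    ∑ i, (hA.add hB).1.eigenvalues i ^ q ≤
      ∑ i, hA.1.eigenvalues i ^ q + ∑ i, hB.1.eigenvalues i ^ q :=
  hA.1.eigenvectorBasis_diagonalizes.sum_rpow_le_add hB.1.eigenvectorBasis_diagonalizes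
    (hA.1.eigenvectorBasis_diagonalizes_add hB.1) hA.eigenvalues_nonneg hB.eigenvalues_nonneg
    hq0 hq1

theorem two_rpow_sub_one_mul_add_le (hA : A.PosSemidef) (hB : B.PosSemidef) {q : ℝ}
    (hq0 : 0 ≤ q) (hq1 : q ≤ 1) :
    2 ^ (q - 1) * (∑ i, hA.1.eigenvalues i ^ q + ∑ i, hB.1.eigenvalues i ^ q) ≤
      ∑ i, (hA.add hB).1.eigenvalues i ^ q :=
  hA.1.eigenvectorBasis_diagonalizes.two_rpow_sub_one_mul_add_le
    hB.1.eigenvectorBasis_diagonalizes (hA.1.eigenvectorBasis_diagonalizes_add hB.1)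
    hA.eigenvalues_nonneg hB.eigenvalues_nonneg hq0 hq1

end PosSemidef

end Matrix

end

theorem schattenNorm_rpow_self {m : Type*} [Fintype m] [DecidableEq m] {p : ℝ} (hp : p ≠ 0)
    (X : Matrix m m ℂ) :
    schattenNorm p X ^ p =
      ∑ i, (Matrix.posSemidef_conjTranspose_mul_self X).1.eigenvalues i ^ (p / 2) := by
  rw [schattenNorm, one_div, Real.rpow_inv_rpow _ hp]
  exact Finset.sum_nonneg fun i _ =>
    Real.rpow_nonneg ((Matrix.posSemidef_conjTranspose_mul_self X).eigenvalues_nonneg i) _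

theorem clarkson_first_lower {m : Type*} [Fintype m] [DecidableEq m]
    (A B : Matrix m m ℂ) (p : ℝ) (hp0 : 0 < p) (hp2 : p ≤ 2) :
    (2 : ℝ) ^ (p - 1) * (schattenNorm p A ^ p + schattenNorm p B ^ p) ≤
      schattenNorm p (A + B) ^ p + schattenNorm p (A - B) ^ p := by
  simp only [schattenNorm_rpow_self hp0.ne']
  have hq0 : 0 < p / 2 := by linarith
  have hq1 : p / 2 ≤ 1 := by linarith
  have hA := Matrix.posSemidef_conjTranspose_mul_self A
  have hB := Matrix.posSemidef_conjTranspose_mul_self B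
  have hconc := hA.two_rpow_sub_one_mul_add_le hB hq0.le hq1
  have hconc_double := (hA.add hB).two_rpow_sub_one_mul_add_le (hA.add hB) hq0.le hq1
  have hsub := (Matrix.posSemidef_conjTranspose_mul_self (A + B)).sum_eigenvalues_add_rpow_le
    (Matrix.posSemidef_conjTranspose_mul_self (A - B)) hq0 hq1
  simp only [Matrix.parallelogram_law_conjTranspose_mul_self] at hsub
  have htwo : (2 : ℝ) ^ (p - 1) = 2 ^ (p / 2 - 1) * 2 ^ (p / 2 - 1) * 2 := by
    rw [← Real.rpow_add two_pos, ← Real.rpow_add_one two_ne_zero]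
    ring_nf
  rw [htwo]
  linarith [mul_le_mul_of_nonneg_left hconc (by positivity : (0 : ℝ) ≤ 2 ^ (p / 2 - 1))]
end

section
/- For complex square matrices A and B and real p with 0 < p ≤ 2, one has ‖A+B‖_p^p + ‖A−B‖_p^p ≤ 2·(‖A‖_p^p + ‖B‖_p^p). -/
open scoped ComplexOrder

/-!
With `s = p / 2`, the `p`-th powers of Schatten norms are traces of `s`-th powers:
`‖X‖_p ^ p = tr (Xᴴ X) ^ s`. Put `X = (A + B)ᴴ (A + B)`, `Y = (A - B)ᴴ (A - B)`, `P = Aᴴ A`,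
`Q = Bᴴ B`, so that `(X + Y) / 2 = P + Q` (parallelogram law). Since `t ↦ t ^ s` is operator
concave for `0 ≤ s ≤ 1`, `(X ^ s + Y ^ s) / 2 ≤ (P + Q) ^ s`, and it remains to prove McCarthy's
inequality `tr (P + Q) ^ s ≤ tr P ^ s + tr Q ^ s`. For invertible `P` and `Q` write
`(P + Q) ^ s = (P + Q) ^ (s - 1) P + (P + Q) ^ (s - 1) Q`; as `t ↦ t ^ (s - 1)` is operator
antitone, `tr (P + Q) ^ (s - 1) P ≤ tr P ^ (s - 1) P = tr P ^ s`, and likewise for `Q`. The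
general case follows by replacing `P, Q` with `P + ε, Q + ε` and letting `ε → 0`.
-/

open scoped Matrix MatrixOrder Matrix.Norms.L2Operator
open Set Filter Topology

namespace CFC

variable {A : Type*} [CStarAlgebra A] [PartialOrder A] [StarOrderedRing A]

lemma rpow_le_rpow_of_exponent_nonpos {r : ℝ} (hr : r ∈ Icc (-1) 0) {a b : A} (hab : a ≤ b)
    (ha : IsStrictlyPositive a) : b ^ r ≤ a ^ r := by
  have hb : IsStrictlyPositive b := ha.of_le hab
  rcases hr.2.eq_or_lt with rfl | hr0
  · rw [rpow_zero a, rpow_zero b]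
  have hpow : ∀ c : A, IsStrictlyPositive c → c ^ r = (c ^ (-r)) ^ (-1 : ℝ) := fun c hc => by
    rw [rpow_rpow c (-r) (-1) (by linarith) hc, neg_mul_neg, mul_one]
  rw [hpow a ha, hpow b hb]
  exact CStarAlgebra.rpow_neg_one_le_rpow_neg_one
    (rpow_le_rpow ⟨by linarith, by linarith [hr.1]⟩ hab)
    ((ha.isUnit.cfcRpow _).isStrictlyPositive rpow_nonneg)

end CFC

namespace Matrix

variable {m 𝕜 : Type*} [Fintype m] [RCLike 𝕜]

lemma trace_mono {A B : Matrix m m 𝕜} (h : A ≤ B) : A.trace ≤ B.trace :=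
  OrderHomClass.mono (tracePositiveLinearMap m 𝕜 𝕜) h

variable [DecidableEq m]

lemma IsHermitian.trace_cfc {A : Matrix m m 𝕜} (hA : A.IsHermitian) (f : ℝ → ℝ) :
    (cfc f A).trace = ∑ i, (f (hA.eigenvalues i) : 𝕜) := by
  rw [hA.cfc_eq, IsHermitian.cfc, Unitary.conjStarAlgAut_apply, trace_mul_cycle,
    Unitary.coe_star_mul_self, one_mul, trace_diagonal]
  rfl

lemma PosSemidef.trace_rpow {A : Matrix m m 𝕜} (hA : A.PosSemidef) (s : ℝ) :
    (A ^ s).trace = ∑ i, ((hA.1.eigenvalues i ^ s : ℝ) : 𝕜) := by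
  rw [CFC.rpow_eq_cfc_real hA.nonneg, hA.1.trace_cfc]

lemma PosSemidef.trace_rpow_add_algebraMap {P : Matrix m m 𝕜} (hP : P.PosSemidef) {ε : ℝ}
    (hε : 0 ≤ ε) (s : ℝ) :
    ((P + algebraMap ℝ _ ε) ^ s).trace = ∑ i, (((hP.1.eigenvalues i + ε) ^ s : ℝ) : 𝕜) := by
  have hshift : P + algebraMap ℝ _ ε = cfc (fun t : ℝ => t + ε) P := by
    rw [cfc_add_const ε (fun t : ℝ => t) P, cfc_id' ℝ P]
  rw [CFC.rpow_eq_cfc_real (add_nonneg hP.nonneg (algebraMap_nonneg _ hε)), hshift,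
    ← cfc_comp' (fun t : ℝ => t ^ s) (fun t => t + ε) P
      ((P.finite_real_spectrum.image _).continuousOn _), hP.1.trace_cfc]

lemma PosSemidef.tendsto_trace_rpow_add_algebraMap {P : Matrix m m 𝕜} (hP : P.PosSemidef)
    {s : ℝ} (hs : 0 ≤ s) : Tendsto (fun ε : ℝ => ((P + algebraMap ℝ _ ε) ^ s).trace) (𝓝[≥] 0)
      (𝓝 ((P ^ s).trace)) := by
  have hlim : Tendsto (fun ε : ℝ => ∑ i, (((hP.1.eigenvalues i + ε) ^ s : ℝ) : 𝕜)) (𝓝[≥] 0)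
      (𝓝 (∑ i, (((hP.1.eigenvalues i + 0) ^ s : ℝ) : 𝕜))) := by
    refine tendsto_nhdsWithin_of_tendsto_nhds (Continuous.tendsto ?_ 0)
    have := Real.continuous_rpow_const hs
    fun_prop
  simp only [add_zero, ← hP.trace_rpow] at hlim
  exact hlim.congr' (eventually_nhdsWithin_of_forall fun ε hε =>
    (hP.trace_rpow_add_algebraMap hε s).symm)

open CFC in
lemma trace_rpow_sub_one_mul_le {P C : Matrix m m ℂ} (hP : IsStrictlyPositive P) (hPC : P ≤ C)
    {s : ℝ} (hs : s ∈ Icc (0 : ℝ) 1) : (C ^ (s - 1) * P).trace ≤ (P ^ s).trace := by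
  set R := P ^ (1 / 2 : ℝ)
  have hR : star R = R := (IsSelfAdjoint.of_nonneg rpow_nonneg).star_eq
  have hRR : R * star R = P := by
    rw [hR, ← rpow_add hP.isUnit, add_halves, rpow_one P]
  have hPs : P ^ s = P ^ (s - 1) * P := by
    conv_lhs => rw [show s = (s - 1) + 1 by ring, rpow_add hP.isUnit, rpow_one P]
  have hconj : ∀ X : Matrix m m ℂ, (X * P).trace = (star R * X * R).trace := fun X => by
    rw [trace_mul_cycle, hRR, trace_mul_comm]
  rw [hPs, hconj, hconj]
  exact trace_mono (star_left_conjugate_le_conjugate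
    (rpow_le_rpow_of_exponent_nonpos ⟨by linarith [hs.1], by linarith [hs.2]⟩ hPC hP) R)

open CFC in
lemma trace_rpow_add_le_of_isStrictlyPositive {P Q : Matrix m m ℂ} (hP : IsStrictlyPositive P)
    (hQ : IsStrictlyPositive Q) {s : ℝ} (hs : s ∈ Icc (0 : ℝ) 1) :
    ((P + Q) ^ s).trace ≤ (P ^ s).trace + (Q ^ s).trace := by
  have hPQ : IsStrictlyPositive (P + Q) := hP.add_nonneg hQ.nonneg
  have hsplit : (P + Q) ^ s = (P + Q) ^ (s - 1) * P + (P + Q) ^ (s - 1) * Q := by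
    conv_lhs => rw [show s = (s - 1) + 1 by ring, rpow_add hPQ.isUnit, rpow_one (P + Q)]
    rw [mul_add]
  rw [hsplit, trace_add]
  exact add_le_add (trace_rpow_sub_one_mul_le hP (le_add_of_nonneg_right hQ.nonneg) hs)
    (trace_rpow_sub_one_mul_le hQ (le_add_of_nonneg_left hP.nonneg) hs)

lemma trace_rpow_add_le {P Q : Matrix m m ℂ} (hP : P.PosSemidef) (hQ : Q.PosSemidef) {s : ℝ}
    (hs : s ∈ Icc (0 : ℝ) 1) : ((P + Q) ^ s).trace ≤ (P ^ s).trace + (Q ^ s).trace := by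
  have hreg : ∀ ε ∈ Ioi (0 : ℝ), ((P + Q + algebraMap ℝ _ (2 * ε)) ^ s).trace ≤
      ((P + algebraMap ℝ _ ε) ^ s).trace + ((Q + algebraMap ℝ _ ε) ^ s).trace := fun ε hε => by
    have hε' := isStrictlyPositive_algebraMap (A := Matrix m m ℂ) (mem_Ioi.mp hε)
    have h := trace_rpow_add_le_of_isStrictlyPositive (.nonneg_add hP.nonneg hε')
      (.nonneg_add hQ.nonneg hε') hs
    rwa [add_add_add_comm, ← map_add, ← two_mul] at h
  have hdouble : Tendsto (fun ε : ℝ => 2 * ε) (𝓝[>] 0) (𝓝[≥] 0) :=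
    tendsto_nhdsWithin_of_tendsto_nhds_of_eventually_within _
      (by simpa using ((continuous_const_mul (2 : ℝ)).tendsto 0).mono_left nhdsWithin_le_nhds)
      (eventually_nhdsWithin_of_forall fun ε hε => by
        simp only [mem_Ici]; linarith [mem_Ioi.mp hε])
  have hleft := ((hP.add hQ).tendsto_trace_rpow_add_algebraMap hs.1).comp hdouble
  have hright := ((hP.tendsto_trace_rpow_add_algebraMap hs.1).add
    (hQ.tendsto_trace_rpow_add_algebraMap hs.1)).mono_left
      (nhdsWithin_mono _ Ioi_subset_Ici_self)
  exact le_of_tendsto_of_tendsto hleft hright (eventually_nhdsWithin_of_forall hreg)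

lemma trace_rpow_add_le_two_mul_trace_rpow_midpoint {X Y : Matrix m m ℂ} (hX : 0 ≤ X)
    (hY : 0 ≤ Y) {s : ℝ} (hs : s ∈ Icc (0 : ℝ) 1) :
    (X ^ s).trace + (Y ^ s).trace ≤ 2 * (((1 / 2 : ℝ) • (X + Y)) ^ s).trace := by
  have h := trace_mono ((CFC.concaveOn_rpow (A := Matrix m m ℂ) hs).2 hX hY
    (by norm_num : (0 : ℝ) ≤ 1 / 2) (by norm_num : (0 : ℝ) ≤ 1 / 2) (by norm_num))
  beta_reduce at h
  rw [← smul_add, trace_smul, trace_add, Complex.real_smul] at h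
  rw [smul_add]
  calc (X ^ s).trace + (Y ^ s).trace
      = 2 * (((1 / 2 : ℝ) : ℂ) * ((X ^ s).trace + (Y ^ s).trace)) := by push_cast; ring
    _ ≤ _ := mul_le_mul_of_nonneg_left h (by norm_num)

end Matrix

lemma schattenNorm_rpow_eq_trace {m : Type*} [Fintype m] [DecidableEq m] {p : ℝ} (hp : 0 < p)
    (X : Matrix m m ℂ) : ((schattenNorm p X ^ p : ℝ) : ℂ) = ((Xᴴ * X) ^ (p / 2)).trace := by
  have hX := Matrix.posSemidef_conjTranspose_mul_self X
  have hsum : 0 ≤ ∑ i, hX.1.eigenvalues i ^ (p / 2) :=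
    Finset.sum_nonneg fun i _ => Real.rpow_nonneg (hX.eigenvalues_nonneg i) _
  rw [schattenNorm, ← Real.rpow_mul hsum, one_div_mul_cancel hp.ne', Real.rpow_one, hX.trace_rpow]
  push_cast
  rfl

theorem clarkson_first_upper {m : Type*} [Fintype m] [DecidableEq m]
    (A B : Matrix m m ℂ) (p : ℝ) (hp0 : 0 < p) (hp2 : p ≤ 2) :
    schattenNorm p (A + B) ^ p + schattenNorm p (A - B) ^ p ≤
      2 * (schattenNorm p A ^ p + schattenNorm p B ^ p) := by
  have hs : p / 2 ∈ Icc (0 : ℝ) 1 := ⟨by linarith, by linarith⟩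
  have hA := Matrix.posSemidef_conjTranspose_mul_self A
  have hB := Matrix.posSemidef_conjTranspose_mul_self B
  have hparallelogram :
      (1 / 2 : ℝ) • ((A + B)ᴴ * (A + B) + (A - B)ᴴ * (A - B)) = Aᴴ * A + Bᴴ * B := by
    simp only [Matrix.conjTranspose_add, Matrix.conjTranspose_sub, add_mul, mul_add, sub_mul,
      mul_sub]
    module
  rw [← Complex.real_le_real]
  push_cast
  simp only [schattenNorm_rpow_eq_trace hp0]
  calc _ ≤ 2 * (((1 / 2 : ℝ) • ((A + B)ᴴ * (A + B) + (A - B)ᴴ * (A - B))) ^ (p / 2)).trace :=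
        Matrix.trace_rpow_add_le_two_mul_trace_rpow_midpoint
          (Matrix.posSemidef_conjTranspose_mul_self _).nonneg
          (Matrix.posSemidef_conjTranspose_mul_self _).nonneg hs
    _ ≤ 2 * (((Aᴴ * A) ^ (p / 2)).trace + ((Bᴴ * B) ^ (p / 2)).trace) := by
      rw [hparallelogram]
      exact mul_le_mul_of_nonneg_left (Matrix.trace_rpow_add_le hA hB hs) (by norm_num)
end

section
/- Let A_1,…,A_n be complex square matrices and p ≥ 2. Then ‖∑_{i=1}^n A_i‖_p^p + ∑_{1≤i<j≤n} ‖A_i − A_j‖_p^p ≤ n^(p-1)·∑_{i=1}^n ‖A_i‖_p^p. -/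
open scoped ComplexOrder

/-!
Write `Tr f(P) = ∑ f(λᵢ(P))` for positive semidefinite `P` and `f(t) = t ^ (p/2)`, which is
convex with `f 0 = 0` because `p ≥ 2`. Then `‖X‖_p^p = Tr f(Xᴴ X)`, and expanding gives
`(∑ Aᵢ)ᴴ(∑ Aᵢ) + ∑_{i<j} (Aᵢ - Aⱼ)ᴴ(Aᵢ - Aⱼ) = n ∑ Aᵢᴴ Aᵢ`.
Two trace inequalities finish the proof. `Tr f` is superadditive on positive semidefinite
matrices, so the left side of the theorem is at most `Tr f(n ∑ Aᵢᴴ Aᵢ)`. The power mean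
inequality, applied to diagonal entries in an eigenbasis of the sum, bounds this by
`n^(p-1) ∑ Tr f(Aᵢᴴ Aᵢ)`.
Both inequalities reduce to the scalar case through the fact that the diagonal of `Uᴴ P U` is
the image of the spectrum of `P` under a doubly stochastic matrix.
-/

open Finset Matrix

theorem ConvexOn.sum_map_mulVec_le {n : Type*} [Fintype n] [DecidableEq n] {s : Set ℝ}
    {f : ℝ → ℝ} (hf : ConvexOn ℝ s f) {M : Matrix n n ℝ}
    (hM : M ∈ doublyStochastic ℝ n) {x : n → ℝ} (hx : ∀ i, x i ∈ s) :
    ∑ i, f ((M *ᵥ x) i) ≤ ∑ i, f (x i) := by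
  obtain ⟨hnonneg, hrow, hcol⟩ := mem_doublyStochastic_iff_sum.mp hM
  calc ∑ i, f ((M *ᵥ x) i) ≤ ∑ i, ∑ j, M i j * f (x j) :=
        sum_le_sum fun i _ => hf.map_sum_le (fun j _ => hnonneg i j) (hrow i) fun j _ => hx j
    _ = ∑ j, f (x j) := by
        rw [sum_comm]
        simp_rw [← sum_mul, hcol, one_mul]

namespace Matrix

variable {n m l 𝕜 : Type*} [Fintype n] [DecidableEq n] [Fintype m] [DecidableEq m]
  [Fintype l] [DecidableEq l] [RCLike 𝕜]

theorem of_norm_sq_mem_doublyStochastic {U : Matrix n n 𝕜} (hU : U ∈ unitaryGroup n 𝕜) :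
    (of fun i j => ‖U i j‖ ^ 2) ∈ doublyStochastic ℝ n := by
  refine mem_doublyStochastic_iff_sum.mpr
    ⟨fun i j => by rw [of_apply]; positivity, fun i => ?_, fun j => ?_⟩
  · have h := congr_fun (congr_fun ((mem_unitaryGroup_iff).mp hU) i) i
    simp only [mul_apply, star_apply, RCLike.star_def, RCLike.mul_conj, one_apply_eq] at h
    exact_mod_cast h
  · have h := congr_fun (congr_fun ((mem_unitaryGroup_iff').mp hU) j) j
    simp only [mul_apply, star_apply, RCLike.star_def, RCLike.conj_mul, one_apply_eq] at h
    exact_mod_cast h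

theorem re_mul_diagonal_mul_star_apply_self (M : Matrix n n 𝕜) (d : n → ℝ) (i : n) :
    RCLike.re ((M * diagonal (RCLike.ofReal ∘ d) * star M : Matrix n n 𝕜) i i) =
      ((of fun i j => ‖M i j‖ ^ 2) *ᵥ d) i := by
  have h (j : n) :
      M i j * RCLike.ofReal (d j) * star (M i j) = RCLike.ofReal (‖M i j‖ ^ 2 * d j) := by
    rw [mul_right_comm, RCLike.star_def, RCLike.mul_conj]
    push_cast
    ring
  simp only [mul_apply (M := M * _), mul_diagonal, star_apply, Function.comp_apply, h,
    ← RCLike.ofReal_sum, RCLike.ofReal_re, mulVec, dotProduct, of_apply]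

theorem fromBlocks_zero_zero_mem_unitaryGroup {U : Matrix m m 𝕜} {V : Matrix l l 𝕜}
    (hU : U ∈ unitaryGroup m 𝕜) (hV : V ∈ unitaryGroup l 𝕜) :
    fromBlocks U 0 0 V ∈ unitaryGroup (m ⊕ l) 𝕜 := by
  rw [mem_unitaryGroup_iff', star_eq_conjTranspose, fromBlocks_conjTranspose, fromBlocks_multiply]
  simp [← star_eq_conjTranspose, (mem_unitaryGroup_iff').mp hU, (mem_unitaryGroup_iff').mp hV]

namespace IsHermitian

variable {A B : Matrix n n 𝕜}

noncomputable def traceFun (hA : A.IsHermitian) (f : ℝ → ℝ) : ℝ :=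
  ∑ i, f (hA.eigenvalues i)

theorem traceFun_congr (hA : A.IsHermitian) (hB : B.IsHermitian) (h : A = B) (f : ℝ → ℝ) :
    hA.traceFun f = hB.traceFun f := by
  subst h
  rfl

theorem traceFun_eq_sum_diag (hA : A.IsHermitian) (f : ℝ → ℝ) :
    hA.traceFun f = ∑ i, f (RCLike.re
      ((star (hA.eigenvectorUnitary : Matrix n n 𝕜) * A * hA.eigenvectorUnitary) i i)) := by
  have h := hA.conjStarAlgAut_star_eigenvectorUnitary
  rw [Unitary.conjStarAlgAut_star_apply] at h
  simp [h, traceFun]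

theorem traceFun_eq_sum_roots_charpoly (hA : A.IsHermitian) (f : ℝ → ℝ) :
    hA.traceFun f = (A.charpoly.roots.map fun z => f (RCLike.re z)).sum := by
  simp [traceFun, hA.roots_charpoly_eq_eigenvalues]

theorem star_mul_mul_eq_mul_diagonal_mul_star (hA : A.IsHermitian) (U : Matrix n n 𝕜) :
    star U * A * U = (star U * (hA.eigenvectorUnitary : Matrix n n 𝕜)) *
      diagonal (RCLike.ofReal ∘ hA.eigenvalues) *
      star (star U * (hA.eigenvectorUnitary : Matrix n n 𝕜)) := by
  conv_lhs => rw [hA.spectral_theorem, Unitary.conjStarAlgAut_apply]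
  simp [Matrix.mul_assoc]

end IsHermitian

open Polynomial in
theorem traceFun_conjTranspose_mul_self (C : Matrix m l 𝕜) {f : ℝ → ℝ} (hf : f 0 = 0) :
    (isHermitian_conjTranspose_mul_self C).traceFun f =
      (isHermitian_mul_conjTranspose_self C).traceFun f := by
  have h := congr_arg (fun p : 𝕜[X] => (p.roots.map fun z => f (RCLike.re z)).sum)
    (charpoly_mul_comm' Cᴴ C)
  rw [IsHermitian.traceFun_eq_sum_roots_charpoly, IsHermitian.traceFun_eq_sum_roots_charpoly]
  simpa [roots_mul, pow_ne_zero, X_ne_zero, (charpoly_monic _).ne_zero, hf, Multiset.map_nsmul,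
    Multiset.sum_nsmul] using h

namespace PosSemidef

variable {f : ℝ → ℝ}

theorem sum_diag_conj_le_traceFun {A : Matrix n n 𝕜} (hA : A.PosSemidef)
    (hf : ConvexOn ℝ (Set.Ici 0) f) {U : Matrix n n 𝕜} (hU : U ∈ unitaryGroup n 𝕜) :
    ∑ i, f (RCLike.re ((star U * A * U : Matrix n n 𝕜) i i)) ≤ hA.1.traceFun f := by
  set M := star U * (hA.1.eigenvectorUnitary : Matrix n n 𝕜)
  have hM : M ∈ unitaryGroup n 𝕜 := mul_mem (Unitary.star_mem hU) hA.1.eigenvectorUnitary.2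
  simp only [hA.1.star_mul_mul_eq_mul_diagonal_mul_star, re_mul_diagonal_mul_star_apply_self]
  exact hf.sum_map_mulVec_le (of_norm_sq_mem_doublyStochastic hM) hA.eigenvalues_nonneg

theorem traceFun_add_traceFun_le_traceFun_fromBlocks {P : Matrix m m 𝕜} {Q : Matrix l l 𝕜}
    {B : Matrix m l 𝕜} {C : Matrix l m 𝕜} (hG : (fromBlocks P B C Q).PosSemidef)
    (hP : P.IsHermitian) (hQ : Q.IsHermitian) (hf : ConvexOn ℝ (Set.Ici 0) f) :
    hP.traceFun f + hQ.traceFun f ≤ hG.1.traceFun f := by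
  have hU := fromBlocks_zero_zero_mem_unitaryGroup hP.eigenvectorUnitary.2 hQ.eigenvectorUnitary.2
  convert hG.sum_diag_conj_le_traceFun hf hU using 1
  rw [hP.traceFun_eq_sum_diag, hQ.traceFun_eq_sum_diag, Fintype.sum_sum_type]
  simp [star_eq_conjTranspose, fromBlocks_conjTranspose, fromBlocks_multiply]

open scoped MatrixOrder in
theorem traceFun_add_traceFun_le_traceFun_add {P Q : Matrix n n 𝕜}
    (hP : P.PosSemidef) (hQ : Q.PosSemidef) (hf : ConvexOn ℝ (Set.Ici 0) f) (hf0 : f 0 = 0) :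
    hP.1.traceFun f + hQ.1.traceFun f ≤ (hP.add hQ).1.traceFun f := by
  obtain ⟨X, rfl⟩ := CStarAlgebra.nonneg_iff_eq_star_mul_self.mp hP.nonneg
  obtain ⟨Y, rfl⟩ := CStarAlgebra.nonneg_iff_eq_star_mul_self.mp hQ.nonneg
  -- Pinch `C Cᴴ`, whose spectrum is that of `Cᴴ C = P + Q` up to zeros.
  set C := fromRows X Y
  have hCC : C * Cᴴ = fromBlocks (X * Xᴴ) (X * Yᴴ) (Y * Xᴴ) (Y * Yᴴ) := by
    simp [C, conjTranspose_fromRows_eq_fromCols_conjTranspose]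
  have hCC' : Cᴴ * C = star X * X + star Y * Y := by
    simp [C, conjTranspose_fromRows_eq_fromCols_conjTranspose, fromCols_mul_fromRows,
      star_eq_conjTranspose]
  have hG : (fromBlocks (X * Xᴴ) (X * Yᴴ) (Y * Xᴴ) (Y * Yᴴ)).PosSemidef :=
    hCC ▸ posSemidef_self_mul_conjTranspose C
  calc hP.1.traceFun f + hQ.1.traceFun f
      = (isHermitian_mul_conjTranspose_self X).traceFun f +
          (isHermitian_mul_conjTranspose_self Y).traceFun f := by
        rw [← traceFun_conjTranspose_mul_self X hf0, ← traceFun_conjTranspose_mul_self Y hf0]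
    _ ≤ hG.1.traceFun f := hG.traceFun_add_traceFun_le_traceFun_fromBlocks _ _ hf
    _ = (hP.add hQ).1.traceFun f := by
        rw [IsHermitian.traceFun_congr _ (isHermitian_mul_conjTranspose_self C) hCC.symm,
          ← traceFun_conjTranspose_mul_self C hf0]
        exact IsHermitian.traceFun_congr _ _ hCC' f

theorem sum_traceFun_le_traceFun_sum {ι : Type*} (s : Finset ι) {Q : ι → Matrix n n 𝕜}
    (hQ : ∀ i, (Q i).PosSemidef) (hf : ConvexOn ℝ (Set.Ici 0) f) (hf0 : f 0 = 0) :
    ∑ i ∈ s, (hQ i).1.traceFun f ≤ (posSemidef_sum s fun i _ => hQ i).1.traceFun f := by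
  classical
  induction s using Finset.induction_on with
  | empty =>
    rw [sum_empty, IsHermitian.traceFun,
      (posSemidef_sum ∅ fun i _ => hQ i).1.eigenvalues_eq_zero_iff.mpr sum_empty]
    simp [hf0]
  | insert a s ha ih =>
    have hS := posSemidef_sum s fun i _ => hQ i
    rw [sum_insert ha, IsHermitian.traceFun_congr _ ((hQ a).add hS).1 (sum_insert ha)]
    exact (add_le_add le_rfl ih).trans ((hQ a).traceFun_add_traceFun_le_traceFun_add hS hf hf0)

theorem traceFun_rpow_sum_le {ι : Type*} (s : Finset ι) {Q : ι → Matrix n n 𝕜}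
    (hQ : ∀ i, (Q i).PosSemidef) {q : ℝ} (hq : 1 ≤ q) :
    (posSemidef_sum s fun i _ => hQ i).1.traceFun (· ^ q) ≤
      (#s : ℝ) ^ (q - 1) * ∑ i ∈ s, (hQ i).1.traceFun (· ^ q) := by
  have hS := posSemidef_sum s fun i _ => hQ i
  set V : Matrix n n 𝕜 := (hS.1.eigenvectorUnitary : Matrix n n 𝕜)
  have hV : V ∈ unitaryGroup n 𝕜 := hS.1.eigenvectorUnitary.2
  set d : ι → n → ℝ := fun i c => RCLike.re ((star V * Q i * V : Matrix n n 𝕜) c c)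
  have hd (i : ι) (c : n) : 0 ≤ d i c :=
    (RCLike.nonneg_iff.mp ((hQ i).conjTranspose_mul_mul_same V).diag_nonneg).1
  calc hS.1.traceFun (· ^ q)
      = ∑ c, (∑ i ∈ s, d i c) ^ q := by
        simp [hS.1.traceFun_eq_sum_diag, d, V, Finset.mul_sum, Finset.sum_mul, Matrix.sum_apply]
    _ ≤ ∑ c, (#s : ℝ) ^ (q - 1) * ∑ i ∈ s, d i c ^ q :=
        sum_le_sum fun c _ => Real.rpow_sum_le_const_mul_sum_rpow_of_nonneg s hq fun i _ => hd i c
    _ = (#s : ℝ) ^ (q - 1) * ∑ i ∈ s, ∑ c, d i c ^ q := by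
        rw [← Finset.mul_sum, Finset.sum_comm]
    _ ≤ (#s : ℝ) ^ (q - 1) * ∑ i ∈ s, (hQ i).1.traceFun (· ^ q) := by
        gcongr with i
        exact (hQ i).sum_diag_conj_le_traceFun (convexOn_rpow hq) hV

end PosSemidef

end Matrix

theorem star_sum_mul_sum_add_sum_Ioi_star_sub_mul_sub {R ι : Type*} [Ring R] [StarRing R]
    [Fintype ι] [LinearOrder ι] [LocallyFiniteOrderTop ι] [LocallyFiniteOrderBot ι]
    (a : ι → R) :
    star (∑ i, a i) * ∑ i, a i + ∑ i, ∑ j ∈ Ioi i, star (a i - a j) * (a i - a j) =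
      Fintype.card ι • ∑ i, star (a i) * a i := by
  set g : ι → ι → R := fun i j => star (a i) * a j
  have hpair (i j : ι) : star (a i - a j) * (a i - a j) = (g i i - g j i) + (g j j - g i j) := by
    simp only [g, star_sub, sub_mul, mul_sub]
    abel
  have hoff (i : ι) : ∑ j ∈ {i}ᶜ, (g i i - g j i) = ∑ j, (g i i - g j i) := by
    rw [← sum_compl_add_sum {i}, sum_singleton, sub_self, add_zero]
  simp_rw [hpair]
  rw [sum_sum_Ioi_add_eq_sum_sum_off_diag fun j i => g i i - g j i]
  simp_rw [hoff, sum_sub_distrib, sum_const, card_univ, star_sum, sum_mul_sum, ← smul_sum]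
  rw [sum_comm]
  abel

theorem Real.mul_self_rpow_half_sub_one_mul {x : ℝ} (hx : 0 ≤ x) {p : ℝ} (hp : p ≠ 1) :
    (x * x) ^ (p / 2 - 1) * x = x ^ (p - 1) := by
  rcases hx.eq_or_lt with rfl | hx
  · simp [Real.zero_rpow (sub_ne_zero.mpr hp)]
  · rw [Real.mul_rpow hx.le hx.le, ← Real.rpow_add hx, ← Real.rpow_add_one hx.ne']
    ring_nf

theorem schattenNorm_rpow_eq_traceFun {m : Type*} [Fintype m] [DecidableEq m]
    (X : Matrix m m ℂ) {p : ℝ} (hp : 0 < p) :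
    schattenNorm p X ^ p = (posSemidef_conjTranspose_mul_self X).1.traceFun (· ^ (p / 2)) := by
  have hX := posSemidef_conjTranspose_mul_self X
  rw [schattenNorm,
    ← Real.rpow_mul (sum_nonneg fun i _ => Real.rpow_nonneg (hX.eigenvalues_nonneg i) _),
    one_div_mul_cancel hp.ne', Real.rpow_one]
  rfl

theorem hirzallah_kittaneh_p_ge_two {m : Type*} [Fintype m] [DecidableEq m] (n : ℕ)
    (A : Fin n → Matrix m m ℂ)
    (p : ℝ) (hp : 2 ≤ p) :
    schattenNorm p (∑ i, A i) ^ p +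
        ∑ i, ∑ j ∈ Finset.Ioi i, schattenNorm p (A i - A j) ^ p ≤
      (n : ℝ) ^ (p - 1) * ∑ i, schattenNorm p (A i) ^ p := by
  have hq : 1 ≤ p / 2 := by linarith
  have hf := convexOn_rpow hq
  have hf0 : (0 : ℝ) ^ (p / 2) = 0 := Real.zero_rpow (by positivity)
  have hB := posSemidef_conjTranspose_mul_self (∑ i, A i)
  have hD (i j : Fin n) := posSemidef_conjTranspose_mul_self (A i - A j)
  have hE (i : Fin n) := posSemidef_sum (Ioi i) fun j _ => hD i j
  have hF := posSemidef_sum univ fun i _ => hE i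
  have hT (x : Fin n × Fin n) := posSemidef_conjTranspose_mul_self (A x.2)
  have hsum : (∑ i, A i)ᴴ * ∑ i, A i + ∑ i, ∑ j ∈ Ioi i, (A i - A j)ᴴ * (A i - A j) =
      ∑ x : Fin n × Fin n, (A x.2)ᴴ * A x.2 := by
    simpa only [Fintype.sum_prod_type, sum_const, card_univ, Fintype.card_fin,
      star_eq_conjTranspose] using
      star_sum_mul_sum_add_sum_Ioi_star_sub_mul_sub A
  simp only [schattenNorm_rpow_eq_traceFun _ (by linarith : (0 : ℝ) < p)]
  set f : ℝ → ℝ := (· ^ (p / 2))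
  calc hB.1.traceFun f + ∑ i, ∑ j ∈ Ioi i, (hD i j).1.traceFun f
      ≤ hB.1.traceFun f + ∑ i, (hE i).1.traceFun f := by
        gcongr with i
        exact PosSemidef.sum_traceFun_le_traceFun_sum _ (hD i) hf hf0
    _ ≤ hB.1.traceFun f + hF.1.traceFun f := by
        gcongr
        exact PosSemidef.sum_traceFun_le_traceFun_sum _ hE hf hf0
    _ ≤ (hB.add hF).1.traceFun f :=
        hB.traceFun_add_traceFun_le_traceFun_add hF hf hf0
    _ = (posSemidef_sum univ fun x _ => hT x).1.traceFun f :=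
        IsHermitian.traceFun_congr _ _ hsum _
    _ ≤ (#univ : ℝ) ^ (p / 2 - 1) * ∑ x, (hT x).1.traceFun f :=
        PosSemidef.traceFun_rpow_sum_le _ hT hq
    _ = (#univ : ℝ) ^ (p / 2 - 1) * ∑ _i : Fin n, ∑ j,
          (posSemidef_conjTranspose_mul_self (A j)).1.traceFun f := by
        rw [Fintype.sum_prod_type]
    _ = n ^ (p - 1) * ∑ j, (posSemidef_conjTranspose_mul_self (A j)).1.traceFun f := by
        simp only [sum_const, card_univ, Fintype.card_prod, Fintype.card_fin, nsmul_eq_mul,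
          Nat.cast_mul]
        rw [← mul_assoc, Real.mul_self_rpow_half_sub_one_mul n.cast_nonneg (by linarith)]
end
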